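/- arXiv:1804.06029 — 2 statements merged into one kernel-verified Lean document; each statement's English description precedes it below -/
import Mathlib

section
/- Let (X,Y) be an exactly 3-separating partition of a 3-connected matroid M with |Y| ≥ 3. Then cl(X) ∩ cl*(X) ∩ Y = ∅. -/
/-!
If `e ∈ Y` lies in `cl(X) ∩ cl*(X)`, then `e` adds nothing to the rank of `X`, while by
orthogonality of circuits and cocircuits `e` is not spanned by `Y - e`. Hence
`λ(X ∪ e) = λ(X) - 1 = 1`. As `X ≠ ∅` (a loop is never a coloop) and `|Y - e| ≥ 2`, the
partition `(X ∪ e, Y - e)` is a 2-separation, contradicting 3-connectivity.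
-/

open Set

namespace PaperDefs

variable {α : Type*}

/-- The rank of a set `X` in a matroid `M`, as an extended natural number:
the supremum of the cardinalities of independent subsets of `X`. -/
noncomputable def eRk (M : Matroid α) (X : Set α) : ℕ∞ :=
  ⨆ I ∈ {I | M.Indep I ∧ I ⊆ X}, I.encard

/-- Deletion of a set of elements from a matroid. -/
def del (M : Matroid α) (D : Set α) : Matroid α := M.restrict (M.E \ D)

/-- Contraction of a set of elements in a matroid. -/
def con (M : Matroid α) (C : Set α) : Matroid α := (del M✶ C)✶

/-- A circuit: a minimal dependent set. -/
def Circuit (M : Matroid α) (C : Set α) : Prop :=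
  M.Dep C ∧ ∀ D, D ⊂ C → M.Indep D

/-- A `k`-separation of `M`: a partition `(X, M.E \ X)` with connectivity
`λ(X) = r(X) + r(E−X) − r(M)` at most `k − 1`, and both sides of size at least `k`. -/
def kSeparation (M : Matroid α) (X : Set α) (k : ℕ) : Prop :=
  X ⊆ M.E ∧ eRk M X + eRk M (M.E \ X) ≤ eRk M M.E + ((k - 1 : ℕ) : ℕ∞) ∧
    (k : ℕ∞) ≤ X.encard ∧ (k : ℕ∞) ≤ (M.E \ X).encard

/-- `M` is `n`-connected if it has no `k`-separations for `0 < k < n`. -/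
def NConnected (M : Matroid α) (n : ℕ) : Prop :=
  ∀ k : ℕ, 0 < k → k < n → ∀ X : Set α, ¬ kSeparation M X k

/-- `X` is 3-separating in `M`: `λ_M(X) ≤ 2`. -/
def ThreeSeparating (M : Matroid α) (X : Set α) : Prop :=
  eRk M X + eRk M (M.E \ X) ≤ eRk M M.E + 2

/-- `X` is exactly 3-separating in `M`: `λ_M(X) = 2`. -/
def ExactlyThreeSeparating (M : Matroid α) (X : Set α) : Prop :=
  eRk M X + eRk M (M.E \ X) = eRk M M.E + 2

/-- `N` is a simplification of `M`: `N` is obtained from `M` by deleting a set of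
elements, `N` has no loops or parallel pairs (no circuits of size at most two), and
every element of `M` is in the closure of the ground set of `N`. -/
def IsSimplificationOf (N M : Matroid α) : Prop :=
  (∃ D ⊆ M.E, N = del M D) ∧ (∀ C, Circuit N C → 3 ≤ C.encard) ∧
    M.closure N.E = M.E

/-- `N` is a cosimplification of `M`: `N✶` is a simplification of `M✶`. -/
def IsCosimplificationOf (N M : Matroid α) : Prop :=
  IsSimplificationOf N✶ M✶

/-- `S` is a series class of `M`: a maximal nonempty set any two distinct elements
of which form a series pair (a two-element cocircuit). -/
def IsSeriesClass (M : Matroid α) (S : Set α) : Prop :=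
  S.Nonempty ∧ S ⊆ M.E ∧ (∀ a ∈ S, ∀ b ∈ S, a ≠ b → Circuit M✶ {a, b}) ∧
    (∀ a ∈ S, ∀ f, Circuit M✶ {a, f} → a ≠ f → f ∈ S)

/-- The full closure of `X` in `M`: the intersection of all sets containing `X ∩ M.E`
that are closed in both `M` and `M✶`. -/
def fullClosure (M : Matroid α) (X : Set α) : Set α :=
  ⋂₀ {F | X ∩ M.E ⊆ F ∧ M.closure F = F ∧ M✶.closure F = F}

end PaperDefs

open PaperDefs

namespace Matroid

variable {α : Type*} {M : Matroid α} {X Y : Set α} {e : α}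

/-- Orthogonality: a circuit through `e` inside `insert e Y` and a cocircuit through `e` inside
`insert e X` would meet exactly in `e`. -/
lemma notMem_closure_of_mem_dual_closure (hXY : Disjoint X Y) (heX : e ∉ X) (heY : e ∉ Y)
    (he : e ∈ M✶.closure X) : e ∉ M.closure Y := by
  intro hcl
  obtain ⟨C, hCY, hC, heC⟩ := M.exists_isCircuit_of_mem_closure hcl heY
  obtain ⟨K, hKX, hK, heK⟩ := M✶.exists_isCircuit_of_mem_closure he heX
  have hCK : C ∩ K = {e} := by
    refine subset_antisymm ?_ (singleton_subset_iff.2 ⟨heC, heK⟩)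
    rintro f ⟨hfC, hfK⟩
    rcases hCY hfC with rfl | hfY
    · rfl
    rcases hKX hfK with rfl | hfX
    · rfl
    exact absurd hfY (hXY.notMem_of_mem_left hfX)
  exact hC.inter_isCocircuit_ne_singleton hK hCK

lemma eRk_insert_eq_of_mem_closure (he : e ∈ M.closure X) : M.eRk (insert e X) = M.eRk X := by
  rw [← eRk_insert_closure_eq, insert_eq_of_mem he, eRk_closure_eq]

lemma eRk_insert_add_eRk_sdiff_insert_add_one (heX : e ∉ X) (heE : e ∈ M.E)
    (hecl : e ∈ M.closure X) (hecl' : e ∈ M✶.closure X) :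
    M.eRk (insert e X) + M.eRk (M.E \ insert e X) + 1 = M.eRk X + M.eRk (M.E \ X) := by
  have hcompl : M.E \ insert e X = (M.E \ X) \ {e} := by
    rw [← union_singleton, ← sdiff_sdiff]
  have hcoloop : e ∉ M.closure ((M.E \ X) \ {e}) :=
    notMem_closure_of_mem_dual_closure (disjoint_sdiff_right.mono_right sdiff_subset) heX
      (by simp) hecl'
  have hrank : M.eRk (M.E \ X) = M.eRk ((M.E \ X) \ {e}) + 1 := by
    rw [← eRk_insert_eq_add_one ((mem_sdiff e).2 ⟨heE, hcoloop⟩), insert_sdiff_singleton,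
      insert_eq_of_mem ((mem_sdiff e).2 ⟨heE, heX⟩)]
  rw [hcompl, hrank, eRk_insert_eq_of_mem_closure hecl, add_assoc]

end Matroid

namespace PaperDefs

lemma eRk_eq_eRk {α : Type*} (M : Matroid α) (X : Set α) : eRk M X = M.eRk X := by
  obtain ⟨I, hI⟩ := M.exists_isBasis' X
  exact le_antisymm (iSup₂_le fun J hJ ↦ hJ.1.encard_le_eRk_of_subset hJ.2)
    (le_iSup₂_of_le I ⟨hI.indep, hI.subset⟩ hI.encard_eq_eRk.ge)

end PaperDefs

/-- If `(X,Y)` is an exactly 3-separating partition of a 3-connected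
matroid `M` with `|Y| ≥ 3`, then `cl(X) ∩ cl*(X) ∩ Y = ∅`. -/
theorem statement_4 {α : Type*} (M : Matroid α) (X Y : Set α)
    (h3 : NConnected M 3) (hu : X ∪ Y = M.E) (hd : Disjoint X Y)
    (hexact : ExactlyThreeSeparating M X) (hY : 3 ≤ Y.encard) :
    M.closure X ∩ M✶.closure X ∩ Y = ∅ := by
  rw [eq_empty_iff_forall_notMem]
  rintro e ⟨⟨hecl, hecl'⟩, heY⟩
  have hEX : M.E \ X = Y := by rw [← hu, union_sdiff_left, hd.sdiff_eq_right]
  have heX : e ∉ X := hd.notMem_of_mem_right heY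
  have heE : e ∈ M.E := hu ▸ Or.inr heY
  have hEeX : M.E \ insert e X = Y \ {e} := by rw [← union_singleton, ← sdiff_sdiff, hEX]
  have hXne : X.Nonempty := by
    rw [nonempty_iff_ne_empty]
    rintro rfl
    exact M.notMem_closure_of_mem_dual_closure (empty_disjoint ∅) (notMem_empty e)
      (notMem_empty e) hecl' hecl
  refine h3 2 two_pos (by norm_num) (insert e X)
    ⟨insert_subset heE (hu ▸ subset_union_left), ?_, ?_, ?_⟩
  · have hdrop := M.eRk_insert_add_eRk_sdiff_insert_add_one heX heE hecl hecl'
    unfold ExactlyThreeSeparating at hexact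
    simp only [eRk_eq_eRk] at hexact ⊢
    rw [hexact, show (2 : ℕ∞) = 1 + 1 from rfl, ← add_assoc] at hdrop
    rw [ENat.add_left_injective_of_ne_top ENat.one_ne_top hdrop]
    norm_num
  · rw [encard_insert_of_notMem heX]
    exact add_le_add_left (one_le_encard_iff_nonempty.2 hXne) 1
  · rw [hEeX]
    refine (ENat.add_le_add_iff_right ENat.one_ne_top).1 ?_
    rw [encard_sdiff_singleton_add_one heY]
    exact hY
end

section
/- Let M be a 3-connected matroid, and suppose (X, {z}, Y) is a vertical 3-separation of M (so (X ∪ {z}, Y) and (X, Y ∪ {z}) are 3-separations with all parts of rank at least 3, and z ∈ cl(X) ∩ cl(Y)). Then either M∖z is 3-connected, or z is contained in a triad of M that meets both X and Y. -/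
open Set

open PaperDefs

/-!
If `M ∖ z` is not 3-connected, take a separation `(A, B)` of it. Since `z ∈ cl(X)`, deleting `z`
does not lower the rank, so 3-connectivity of `M` forces `(A, B)` to be an exact 2-separation
with `z ∉ cl(A) ∪ cl(B)`. Uncrossing `(A, B)` with `(X, Y)` by submodularity shows that one side,
say `A`, meets each of `X` and `Y` in at most one element, so `A = {x, y}` with `x ∈ X`, `y ∈ Y`.
Then the complement `B` of `{x, y, z}` does not span `z`, so `{x, y, z}` is codependent, while
3-connectivity makes each of its pairs coindependent: `{x, y, z}` is a triad.
-/

namespace Matroid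

variable {α : Type*} {M : Matroid α} {X Y : Set α} {e : α}

/-- The rank as a natural number; it is `0` on sets of infinite rank. -/
noncomputable def rk (M : Matroid α) (X : Set α) : ℕ := (M.eRk X).toNat

lemma cast_rk_eq [M.RankFinite] (X : Set α) : (M.rk X : ℕ∞) = M.eRk X :=
  ENat.natCast_toNat (M.isRkFinite_set X).eRk_lt_top.ne

lemma rk_mono [M.RankFinite] (h : X ⊆ Y) : M.rk X ≤ M.rk Y := by
  have := M.eRk_mono h
  rwa [← cast_rk_eq, ← cast_rk_eq, Nat.cast_le] at this

lemma rk_inter_add_rk_union_le [M.RankFinite] (X Y : Set α) :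
    M.rk (X ∩ Y) + M.rk (X ∪ Y) ≤ M.rk X + M.rk Y := by
  have := M.eRk_inter_add_eRk_union_le X Y
  simp only [← cast_rk_eq] at this
  exact_mod_cast this

lemma rk_insert_le_add_one [M.RankFinite] (e : α) (X : Set α) :
    M.rk (insert e X) ≤ M.rk X + 1 := by
  have := M.eRk_insert_le_add_one e X
  simp only [← cast_rk_eq] at this
  exact_mod_cast this

lemma rk_insert_of_mem_closure (he : e ∈ M.closure X) : M.rk (insert e X) = M.rk X := by
  rw [rk, rk, ← eRk_insert_closure_eq, insert_eq_of_mem he, eRk_closure_eq]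

lemma cast_rk_le_encard [M.RankFinite] (X : Set α) : (M.rk X : ℕ∞) ≤ X.encard := by
  rw [cast_rk_eq]
  exact M.eRk_le_encard X

lemma spanning_iff_rk_le [M.RankFinite] (hX : X ⊆ M.E) : M.Spanning X ↔ M.rk M.E ≤ M.rk X := by
  rw [spanning_iff_eRk_le hX, ← eRk_ground, ← cast_rk_eq, ← cast_rk_eq, Nat.cast_le]

end Matroid

namespace Set

variable {α : Type*} {A B X : Set α}

lemma encard_le_two_of_subset_union (hX : X ⊆ A ∪ B) (hA : (A ∩ X).encard ≤ 1)
    (hB : (B ∩ X).encard ≤ 1) : X.encard ≤ 2 :=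
  calc X.encard ≤ ((A ∩ X) ∪ (B ∩ X)).encard :=
        encard_mono fun _ ha ↦ (hX ha).imp (⟨·, ha⟩) (⟨·, ha⟩)
    _ ≤ 1 + 1 := (encard_union_le _ _).trans (add_le_add hA hB)

end Set

namespace PaperDefs

open Matroid

variable {α : Type*} {M : Matroid α} {A B C D P S T U V X Y : Set α} {z : α} {k n : ℕ}

lemma eRk_eq_matroid_eRk (M : Matroid α) (X : Set α) : eRk M X = M.eRk X := by
  refine le_antisymm (iSup₂_le fun I hI ↦ hI.1.encard_le_eRk_of_subset hI.2) ?_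
  obtain ⟨I, hI⟩ := M.exists_isBasis' X
  rw [← hI.encard_eq_eRk]
  exact le_iSup₂ (f := fun I (_ : I ∈ {I | M.Indep I ∧ I ⊆ X}) ↦ I.encard) I ⟨hI.indep, hI.subset⟩

lemma circuit_iff_isCircuit : Circuit M C ↔ M.IsCircuit C := by
  rw [isCircuit_iff_forall_ssubset, Circuit]

lemma del_ground (M : Matroid α) (D : Set α) : (del M D).E = M.E \ D := rfl

instance [M.RankFinite] : (del M D).RankFinite := restrict_rankFinite _

lemma rk_del (hX : X ⊆ M.E \ D) : (del M D).rk X = M.rk X := by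
  rw [rk, rk, del, restrict_eRk_eq _ hX]

lemma kSeparation_iff [M.RankFinite] : kSeparation M X k ↔ X ⊆ M.E ∧
    M.rk X + M.rk (M.E \ X) ≤ M.rk M.E + (k - 1) ∧ k ≤ X.encard ∧ k ≤ (M.E \ X).encard := by
  simp only [kSeparation, eRk_eq_matroid_eRk, ← cast_rk_eq]
  norm_cast

lemma NConnected.rankFinite (h : NConnected M n) (hn : 1 < n) (hX : X ⊆ M.E) (hne : X.Nonempty)
    (hne' : (M.E \ X).Nonempty) : M.RankFinite := by
  by_contra hfin
  refine h 1 one_pos hn X ⟨hX, ?_, by simpa using hne, by simpa using hne'⟩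
  rw [eRk_eq_matroid_eRk M M.E, eRk_ground,
    (eRank_eq_top_iff M).2 ((not_rankFinite_iff M).1 hfin), top_add]
  exact le_top

lemma NConnected.rk_add_two_le (h : NConnected M n) (hn : 2 < n) [M.RankFinite] (hS : S ⊆ M.E)
    (hS2 : 2 ≤ S.encard) (hSc : 2 ≤ (M.E \ S).encard) :
    M.rk M.E + 2 ≤ M.rk S + M.rk (M.E \ S) := by
  by_contra hlt
  exact h 2 two_pos hn S
    (kSeparation_iff.2 ⟨hS, by omega, by exact_mod_cast hS2, by exact_mod_cast hSc⟩)

lemma NConnected.rk_add_two_le_of_union_eq (h : NConnected M n) (hn : 2 < n) [M.RankFinite]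
    (hST : S ∪ T = M.E) (hd : Disjoint S T) (hS2 : 2 ≤ S.encard) (hT2 : 2 ≤ T.encard) :
    M.rk M.E + 2 ≤ M.rk S + M.rk T := by
  have hT : M.E \ S = T := by rw [← hST, union_sdiff_left, hd.sdiff_eq_right]
  rw [← hT] at hT2 ⊢
  exact h.rk_add_two_le hn (hST ▸ subset_union_left) hS2 hT2

lemma NConnected.rk_add_two_le_insert (h3 : NConnected M 3) [M.RankFinite]
    (hAB : A ∪ B = M.E \ {z}) (hd : Disjoint A B) (hz : z ∈ M.E) (hA : 2 ≤ A.encard)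
    (hB : B.Nonempty) : M.rk M.E + 2 ≤ M.rk A + M.rk (insert z B) := by
  have hzA : z ∉ A := fun h ↦ (hAB ▸ subset_union_left h : z ∈ M.E \ {z}).2 rfl
  have hzB : z ∉ B := fun h ↦ (hAB ▸ subset_union_right h : z ∈ M.E \ {z}).2 rfl
  refine h3.rk_add_two_le_of_union_eq (by norm_num) ?_ (disjoint_insert_right.2 ⟨hzA, hd⟩) hA ?_
  · rw [union_insert, hAB, insert_sdiff_singleton, insert_eq_of_mem hz]
  · rw [encard_insert_of_notMem hzB, ← one_add_one_eq_two]
    exact add_le_add_left (one_le_encard_iff_nonempty.2 hB) 1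

lemma NConnected.exists_partition_of_not_nconnected_del (h3 : NConnected M 3) [M.RankFinite]
    (hz : z ∈ M.closure (M.E \ {z})) (hE : 3 ≤ (M.E \ {z}).encard)
    (hN : ¬ NConnected (del M {z}) 3) :
    ∃ A B, A ∪ B = M.E \ {z} ∧ Disjoint A B ∧ 2 ≤ A.encard ∧ 2 ≤ B.encard ∧
      M.rk A + M.rk B ≤ M.rk M.E + 1 ∧ z ∉ M.closure A ∧ z ∉ M.closure B := by
  have hzE : z ∈ M.E := M.mem_ground_of_mem_closure hz
  simp only [NConnected, not_forall, not_not] at hN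
  obtain ⟨k, hk0, hk3, A, hA⟩ := hN
  obtain ⟨hAE, hrk, hkA, hkB⟩ := kSeparation_iff.1 hA
  rw [del_ground] at hAE hrk hkB
  rw [rk_del hAE, rk_del sdiff_subset, rk_del subset_rfl, ← rk_insert_of_mem_closure hz,
    insert_sdiff_singleton, insert_eq_of_mem hzE] at hrk
  set B := (M.E \ {z}) \ A
  have hAB : A ∪ B = M.E \ {z} := union_sdiff_cancel hAE
  have hd : Disjoint A B := disjoint_sdiff_right
  have hAne : A.Nonempty := one_le_encard_iff_nonempty.1 ((Nat.one_le_cast.2 hk0).trans hkA)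
  have hBne : B.Nonempty := one_le_encard_iff_nonempty.1 ((Nat.one_le_cast.2 hk0).trans hkB)
  have hk : k = 2 := by
    obtain hA2 | hB2 : 2 ≤ A.encard ∨ 2 ≤ B.encard := by
      by_contra! hsmall
      have := (hE.trans_eq (congrArg encard hAB.symm)).trans (encard_union_le A B)
      have := this.trans (add_le_add (ENat.lt_two_iff.1 hsmall.1) (ENat.lt_two_iff.1 hsmall.2))
      norm_num at this
    · have := h3.rk_add_two_le_insert hAB hd hzE hA2 hBne
      have := M.rk_insert_le_add_one z B
      omega
    · have := h3.rk_add_two_le_insert (union_comm A B ▸ hAB) hd.symm hzE hB2 hAne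
      have := M.rk_insert_le_add_one z A
      omega
  subst hk
  have hA2 : 2 ≤ A.encard := by exact_mod_cast hkA
  have hB2 : 2 ≤ B.encard := by exact_mod_cast hkB
  refine ⟨A, B, hAB, hd, hA2, hB2, hrk, fun hzA ↦ ?_, fun hzB ↦ ?_⟩
  · have := h3.rk_add_two_le_insert (union_comm A B ▸ hAB) hd.symm hzE hB2 hAne
    rw [rk_insert_of_mem_closure hzA] at this
    omega
  · have := h3.rk_add_two_le_insert hAB hd hzE hA2 hBne
    rw [rk_insert_of_mem_closure hzB] at this
    omega

lemma NConnected.rk_add_two_le_inter_union (h3 : NConnected M 3) [M.RankFinite]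
    (hAB : A ∪ B = M.E \ {z}) (hd : Disjoint A B) (hXY : X ∪ Y = M.E \ {z})
    (hzY : z ∈ M.closure Y) (hAX : 2 ≤ (A ∩ X).encard) (hBY : 2 ≤ (B ∩ Y).encard) :
    M.rk M.E + 2 ≤ M.rk (A ∩ X) + M.rk (B ∪ Y) := by
  have hAXE : A ∩ X ⊆ M.E :=
    inter_subset_left.trans ((hAB ▸ subset_union_left).trans sdiff_subset)
  have hBYc : B ∩ Y ⊆ M.E \ (A ∩ X) := fun a ha ↦
    ⟨(hAB ▸ subset_union_right ha.1 : a ∈ M.E \ {z}).1, fun h ↦ hd.notMem_of_mem_left h.1 ha.1⟩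
  have hcompl : M.E \ (A ∩ X) ⊆ insert z (B ∪ Y) := by
    rintro a ⟨haE, haAX⟩
    by_cases haz : a = z
    · exact .inl haz
    have haAB : a ∈ A ∪ B := hAB ▸ ⟨haE, haz⟩
    have haXY : a ∈ X ∪ Y := hXY ▸ ⟨haE, haz⟩
    simp only [mem_insert_iff, mem_union, mem_inter_iff] at haAB haXY haAX ⊢
    tauto
  have h := h3.rk_add_two_le (by norm_num) hAXE hAX (hBY.trans (encard_mono hBYc))
  have hmono := M.rk_mono hcompl
  rw [rk_insert_of_mem_closure (M.closure_subset_closure subset_union_right hzY)] at hmono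
  omega

lemma NConnected.encard_inter_le_one_or (h3 : NConnected M 3) [M.RankFinite]
    (hAB : A ∪ B = M.E \ {z}) (hd : Disjoint A B) (hXY : X ∪ Y = M.E \ {z})
    (hzX : z ∈ M.closure X) (hzY : z ∈ M.closure Y)
    (hrAB : M.rk A + M.rk B ≤ M.rk M.E + 1) (hrXY : M.rk X + M.rk Y ≤ M.rk M.E + 2) :
    (A ∩ X).encard ≤ 1 ∨ (B ∩ Y).encard ≤ 1 := by
  by_contra! hbig
  have h₁ := h3.rk_add_two_le_inter_union hAB hd hXY hzY
    (Order.add_one_le_of_lt hbig.1) (Order.add_one_le_of_lt hbig.2)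
  have h₂ := h3.rk_add_two_le_inter_union (union_comm A B ▸ hAB) hd.symm (union_comm X Y ▸ hXY)
    hzX (Order.add_one_le_of_lt hbig.2) (Order.add_one_le_of_lt hbig.1)
  have hA := M.rk_inter_add_rk_union_le A X
  have hB := M.rk_inter_add_rk_union_le B Y
  omega

lemma NConnected.coindep_of_encard_eq_two (h : NConnected M n) (hn : 2 < n) [M.RankFinite]
    (hP : P ⊆ M.E) (hP2 : P.encard = 2) (hPc : 2 ≤ (M.E \ P).encard) : M.Coindep P := by
  rw [coindep_iff_compl_spanning hP, spanning_iff_rk_le sdiff_subset]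
  have hbound := h.rk_add_two_le hn hP hP2.ge hPc
  have hrP : M.rk P ≤ 2 := by exact_mod_cast (M.cast_rk_le_encard P).trans hP2.le
  omega

lemma NConnected.isCircuit_dual (h : NConnected M n) (hn : 2 < n) [M.RankFinite]
    (hT : T ⊆ M.E) (hT3 : T.encard = 3) (hne : (M.E \ T).Nonempty)
    (hsp : ¬ M.Spanning (M.E \ T)) : M✶.IsCircuit T := by
  rw [isCircuit_iff_dep_forall_sdiff_singleton_indep]
  refine ⟨⟨fun hi ↦ hsp ((coindep_iff_compl_spanning hT).1 hi), hT⟩, fun e he ↦ ?_⟩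
  refine h.coindep_of_encard_eq_two hn (sdiff_subset.trans hT) ?_ ?_
  · rw [encard_sdiff_singleton_of_mem he, hT3]
    rfl
  · have hsub : insert e (M.E \ T) ⊆ M.E \ (T \ {e}) :=
      insert_subset_iff.2 ⟨⟨hT he, fun h ↦ h.2 rfl⟩, sdiff_subset_sdiff_right sdiff_subset⟩
    refine le_trans ?_ (encard_mono hsub)
    rw [encard_insert_of_notMem fun h ↦ h.2 he, ← one_add_one_eq_two]
    exact add_le_add_left (one_le_encard_iff_nonempty.2 hne) 1

lemma NConnected.exists_triad (h3 : NConnected M 3) [M.RankFinite]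
    (hUV : U ∪ V = M.E \ {z}) (hd : Disjoint U V) (hz : z ∈ M.E) (hU2 : 2 ≤ U.encard)
    (hV : V.Nonempty) (hzV : z ∉ M.closure V) (hUXY : U ⊆ X ∪ Y)
    (hUX : (U ∩ X).encard ≤ 1) (hUY : (U ∩ Y).encard ≤ 1) :
    ∃ T, Circuit M✶ T ∧ T.encard = 3 ∧ z ∈ T ∧ (T ∩ X).Nonempty ∧ (T ∩ Y).Nonempty := by
  have hzU : z ∉ U := fun h ↦ (hUV ▸ subset_union_left h : z ∈ M.E \ {z}).2 rfl
  have hUcover : U ⊆ (U ∩ X) ∪ (U ∩ Y) := fun a ha ↦ (hUXY ha).imp (⟨ha, ·⟩) (⟨ha, ·⟩)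
  have hU : U.encard = 2 :=
    le_antisymm ((encard_mono hUcover).trans ((encard_union_le _ _).trans (add_le_add hUX hUY)))
      hU2
  have hUX' : (U ∩ X).Nonempty := by
    rw [nonempty_iff_ne_empty]
    intro h
    rw [h, empty_union] at hUcover
    have := hU2.trans ((encard_mono hUcover).trans hUY)
    norm_num at this
  have hUY' : (U ∩ Y).Nonempty := by
    rw [nonempty_iff_ne_empty]
    intro h
    rw [h, union_empty] at hUcover
    have := hU2.trans ((encard_mono hUcover).trans hUX)
    norm_num at this
  have hcompl : M.E \ insert z U = V := by
    rw [insert_eq, ← sdiff_sdiff, ← hUV, union_sdiff_left, hd.sdiff_eq_right]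
  have hT : insert z U ⊆ M.E := insert_subset hz ((hUV ▸ subset_union_left).trans sdiff_subset)
  have hT3 : (insert z U).encard = 3 := by
    rw [encard_insert_of_notMem hzU, hU]
    rfl
  refine ⟨insert z U, circuit_iff_isCircuit.2 (h3.isCircuit_dual (by norm_num) hT hT3
    (hcompl ▸ hV) (hcompl ▸ fun hsp ↦ hzV (hsp.closure_eq ▸ hz))), hT3, mem_insert z U,
    hUX'.mono (inter_subset_inter_left _ (subset_insert z U)),
    hUY'.mono (inter_subset_inter_left _ (subset_insert z U))⟩

end PaperDefs

theorem statement_15_general {α : Type*} (M : Matroid α) (X Y : Set α) (z : α)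
    (h3 : NConnected M 3)
    (hu : X ∪ {z} ∪ Y = M.E) (hzX : z ∉ X) (hzY : z ∉ Y) (hXY : Disjoint X Y)
    (hrY : 3 ≤ eRk M Y)
    (hsep2 : kSeparation M X 3)
    (hcl : z ∈ M.closure X ∩ M.closure Y) :
    NConnected (del M {z}) 3 ∨
      ∃ T : Set α, Circuit M✶ T ∧ T.encard = 3 ∧ z ∈ T ∧
        (T ∩ X).Nonempty ∧ (T ∩ Y).Nonempty := by
  by_cases hN : NConnected (del M {z}) 3
  · exact Or.inl hN
  right
  have hzE : z ∈ M.E := M.mem_ground_of_mem_closure hcl.1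
  have hXYE : X ∪ Y = M.E \ {z} := by
    rw [← hu, union_right_comm, union_sdiff_right, sdiff_singleton_eq_self (by simp [hzX, hzY])]
  have hX3 : 3 ≤ X.encard := by exact_mod_cast hsep2.2.2.1
  have hY3 : 3 ≤ Y.encard := hrY.trans ((eRk_eq_matroid_eRk M Y).trans_le (M.eRk_le_encard Y))
  have : M.RankFinite := h3.rankFinite (by norm_num) hsep2.1
    (one_le_encard_iff_nonempty.1 ((by norm_num : (1 : ℕ∞) ≤ 3).trans hX3)) ⟨z, hzE, hzX⟩
  have hrXY : M.rk X + M.rk Y ≤ M.rk M.E + 2 := by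
    have hsep := (kSeparation_iff.1 hsep2).2.1
    have hYc := M.rk_mono
      (subset_sdiff.2 ⟨hXYE ▸ subset_union_right |>.trans sdiff_subset, hXY.symm⟩)
    omega
  obtain ⟨A, B, hAB, hd, hA2, hB2, hrAB, hzA, hzB⟩ := h3.exists_partition_of_not_nconnected_del
    (M.closure_subset_closure (hXYE ▸ subset_union_left) hcl.1)
    (hXYE ▸ hX3.trans (encard_mono subset_union_left)) hN
  have hXAB : X ⊆ A ∪ B := hAB ▸ hXYE ▸ subset_union_left
  have hYAB : Y ⊆ A ∪ B := hAB ▸ hXYE ▸ subset_union_right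
  rcases h3.encard_inter_le_one_or hAB hd hXYE hcl.1 hcl.2 hrAB hrXY with hAX | hBY <;>
    rcases h3.encard_inter_le_one_or hAB hd (union_comm X Y ▸ hXYE) hcl.2 hcl.1 hrAB (by omega)
      with hAY | hBX
  · exact h3.exists_triad hAB hd hzE hA2 (one_le_encard_iff_nonempty.1 (one_le_two.trans hB2))
      hzB (hXYE ▸ hAB ▸ subset_union_left) hAX hAY
  · exact absurd (hX3.trans (encard_le_two_of_subset_union hXAB hAX hBX)) (by norm_num)
  · exact absurd (hY3.trans (encard_le_two_of_subset_union hYAB hAY hBY)) (by norm_num)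
  · exact h3.exists_triad (union_comm A B ▸ hAB) hd.symm hzE hB2
      (one_le_encard_iff_nonempty.1 (one_le_two.trans hA2)) hzA
      (hXYE ▸ hAB ▸ subset_union_right) hBX hBY

/-- If `(X, {z}, Y)` is a vertical 3-separation of a 3-connected
matroid `M`, then either `M ∖ z` is 3-connected, or `z` is in a triad of `M`
meeting both `X` and `Y`. -/
theorem statement_15 {α : Type*} (M : Matroid α) (X Y : Set α) (z : α)
    (h3 : NConnected M 3)
    (hu : X ∪ {z} ∪ Y = M.E) (hzX : z ∉ X) (hzY : z ∉ Y) (hXY : Disjoint X Y)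
    (hsep1 : kSeparation M (X ∪ {z}) 3)
    (hr1 : 3 ≤ eRk M (X ∪ {z})) (hrY : 3 ≤ eRk M Y)
    (hsep2 : kSeparation M X 3)
    (hrX : 3 ≤ eRk M X) (hr2 : 3 ≤ eRk M (Y ∪ {z}))
    (hcl : z ∈ M.closure X ∩ M.closure Y) :
    NConnected (del M {z}) 3 ∨
      ∃ T : Set α, Circuit M✶ T ∧ T.encard = 3 ∧ z ∈ T ∧
        (T ∩ X).Nonempty ∧ (T ∩ Y).Nonempty :=
  statement_15_general M X Y z h3 hu hzX hzY hXY hrY hsep2 hcl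
end
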